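/- arXiv:2204.09129 — 2 statements merged into one kernel-verified Lean document; each statement's English description precedes it below -/
import Mathlib

section
/- Let P ⊆ ℝ^n be a half-integral polytope of dimension d, and suppose there is an integer s such that every vertex of P has exactly n − s coordinates equal to 1/2. Then for every c ∈ ℝ^n and every vertex u of P there exists a c-monotone path of length at most 2s from u to a vertex maximizing x ↦ cᵀx over P. -/
open Set Finset

/-- The standard dot product on `Fin n → ℝ`. -/
def dotp {n : ℕ} (c x : Fin n → ℝ) : ℝ := ∑ i, c i * x i

/-- A polytope is the convex hull of a finite nonempty set of points. -/
def IsPolytope {n : ℕ} (P : Set (Fin n → ℝ)) : Prop :=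
  ∃ S : Finset (Fin n → ℝ), S.Nonempty ∧ P = convexHull ℝ (S : Set (Fin n → ℝ))

/-- The dimension of a polytope: the dimension of its affine hull. -/
noncomputable def polytopeDim {n : ℕ} (P : Set (Fin n → ℝ)) : ℕ :=
  Module.finrank ℝ (affineSpan ℝ P).direction

/-- A vertex of a polytope is an extreme point. -/
def IsVertexOf {n : ℕ} (P : Set (Fin n → ℝ)) (v : Fin n → ℝ) : Prop :=
  v ∈ Set.extremePoints ℝ P

/-- An edge of a polytope: a segment between two distinct vertices that is an
exposed face of `P`; its endpoints are then called neighbors. -/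
def IsEdgeOf {n : ℕ} (P : Set (Fin n → ℝ)) (u v : Fin n → ℝ) : Prop :=
  u ≠ v ∧ IsVertexOf P u ∧ IsVertexOf P v ∧ IsExposed ℝ P (segment ℝ u v)

/-- A `c`-monotone path of length `m` in `P`: a sequence of `m+1` vertices of `P`
such that consecutive vertices form edges of `P` and the value of `cᵀx` strictly
increases along the path. -/
def IsMonotonePath {n : ℕ} (P : Set (Fin n → ℝ)) (c : Fin n → ℝ) (m : ℕ)
    (p : Fin (m + 1) → (Fin n → ℝ)) : Prop :=
  (∀ i, IsVertexOf P (p i)) ∧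
  ∀ i : Fin m, IsEdgeOf P (p i.castSucc) (p i.succ) ∧
    dotp c (p i.castSucc) < dotp c (p i.succ)

/-!
All vertices are half-integral with exactly `s` coordinates different from `1/2`, so they lie on
the sphere of squared radius `s/4` around `q = (1/2, …, 1/2)`, and each vertex `v` is strictly
exposed by `v - q`. From `u`, follow the shadow-vertex path of the objectives `(u - q) + t • c` as
`t` grows: every edge strictly increases `c` and strictly decreases `ℓ = u - q`. On half-integral
points `ℓ` takes values in `ℤ/4`, and on the sphere its range is at most `s/2`; hence the path has
at most `2s` edges.
-/

open Filter Topology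

lemma exists_pos_forall_add_mul_neg {α : Type*} {S : Finset α} {a b : α → ℝ}
    (h : ∀ i ∈ S, a i < 0) : ∃ ε > 0, ∀ i ∈ S, a i + ε * b i < 0 := by
  have hev : ∀ᶠ ε in 𝓝[>] (0 : ℝ), ∀ i ∈ S, a i + ε * b i < 0 := by
    refine (eventually_all_finset S).2 fun i hi => nhdsWithin_le_nhds ?_
    exact ContinuousAt.eventually_lt (by fun_prop) continuousAt_const (by simpa using h i hi)
  obtain ⟨ε, hε, hεpos⟩ := (hev.and self_mem_nhdsWithin).exists
  exact ⟨ε, hεpos, hε⟩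

lemma Fin.rel_cons_castSucc_cons_succ {α : Type*} {R : α → α → Prop} {m : ℕ} {x : α}
    {p : Fin (m + 1) → α} (hx : R x (p 0)) (hp : ∀ i : Fin m, R (p i.castSucc) (p i.succ)) :
    ∀ i : Fin (m + 1), R ((Fin.cons x p : Fin (m + 2) → α) i.castSucc)
      ((Fin.cons x p : Fin (m + 2) → α) i.succ) := by
  intro i
  cases i using Fin.cases with
  | zero => simpa using hx
  | succ j => simpa [← Fin.succ_castSucc] using hp j

lemma Fin.add_mul_le_of_forall_succ {m : ℕ} {f : Fin (m + 1) → ℝ} {δ : ℝ}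
    (h : ∀ i : Fin m, f i.succ + δ ≤ f i.castSucc) : f (Fin.last m) + m * δ ≤ f 0 := by
  suffices ∀ i : Fin (m + 1), f i + i * δ ≤ f 0 by simpa using this (Fin.last m)
  intro i
  induction i using Fin.induction with
  | zero => simp
  | succ i ih =>
    have := h i
    rw [Fin.val_succ, Fin.val_castSucc] at *
    push_cast
    linarith

section ConvexPosition

variable {ι : Type*} [Fintype ι]

lemma dotProduct_self_nonneg (x : ι → ℝ) : 0 ≤ x ⬝ᵥ x := by
  simpa using dotProduct_star_self_nonneg x

lemma dotProduct_lt_dotProduct_self {x y : ι → ℝ} (hle : x ⬝ᵥ x ≤ y ⬝ᵥ y) (hne : x ≠ y) :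
    y ⬝ᵥ x < y ⬝ᵥ y := by
  have hpos : 0 < (y - x) ⬝ᵥ (y - x) :=
    (dotProduct_self_nonneg _).lt_of_ne' (dotProduct_self_eq_zero.not.2 (sub_ne_zero.2 hne.symm))
  simp only [sub_dotProduct, dotProduct_sub, dotProduct_comm x y] at hpos
  linarith

lemma dotProduct_lt_of_sphere {T : Finset (ι → ℝ)} {q : ι → ℝ} {ρ : ℝ}
    (hT : ∀ v ∈ T, (v - q) ⬝ᵥ (v - q) = ρ) {a v : ι → ℝ} (ha : a ∈ T) (hv : v ∈ T)
    (hva : v ≠ a) : (a - q) ⬝ᵥ v < (a - q) ⬝ᵥ a := by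
  have := dotProduct_lt_dotProduct_self (x := v - q) (y := a - q) (by rw [hT v hv, hT a ha])
    (by simpa using hva)
  simp only [dotProduct_sub] at this
  linarith

lemma dotProduct_sub_le_of_sphere {q u b : ι → ℝ} {ρ : ℝ} (hu : (u - q) ⬝ᵥ (u - q) = ρ)
    (hb : (b - q) ⬝ᵥ (b - q) = ρ) : (u - q) ⬝ᵥ u - (u - q) ⬝ᵥ b ≤ 2 * ρ := by
  have := dotProduct_self_nonneg ((u - q) + (b - q))
  simp only [add_dotProduct, dotProduct_add, dotProduct_comm (b - q) (u - q)] at this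
  simp only [dotProduct_sub] at hu hb this ⊢
  linarith

def IsStrictlyExposedIn (T : Finset (ι → ℝ)) (x : ι → ℝ) : Prop :=
  ∃ ℓ : ι → ℝ, ∀ v ∈ T, v ≠ x → ℓ ⬝ᵥ v < ℓ ⬝ᵥ x

def IsExposedEdgeIn (T : Finset (ι → ℝ)) (a b : ι → ℝ) : Prop :=
  ∃ g : ι → ℝ, g ⬝ᵥ b = g ⬝ᵥ a ∧ ∀ v ∈ T, v ≠ a → v ≠ b → g ⬝ᵥ v < g ⬝ᵥ a

lemma IsStrictlyExposedIn.mono {T T' : Finset (ι → ℝ)} {x : ι → ℝ} (h : IsStrictlyExposedIn T x)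
    (hT' : T' ⊆ T) : IsStrictlyExposedIn T' x :=
  let ⟨ℓ, hℓ⟩ := h; ⟨ℓ, fun v hv => hℓ v (hT' hv)⟩

lemma eq_of_sub_eq_smul_sub {T : Finset (ι → ℝ)} (hT : ∀ x ∈ T, IsStrictlyExposedIn T x)
    {a v w : ι → ℝ} (ha : a ∈ T) (hv : v ∈ T) (hw : w ∈ T) {μ : ℝ} (hμ : 0 < μ)
    (h : v - a = μ • (w - a)) : v = w := by
  by_contra hvw
  have hwa : w ≠ a := by rintro rfl; simp_all [sub_eq_zero]
  have hva : v ≠ a := by rintro rfl; simp_all [eq_comm, sub_eq_zero, hμ.ne']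
  have hline : ∀ ℓ : ι → ℝ, ℓ ⬝ᵥ v = ℓ ⬝ᵥ a + μ * (ℓ ⬝ᵥ w - ℓ ⬝ᵥ a) := fun ℓ => by
    rw [eq_add_of_sub_eq' h, dotProduct_add, dotProduct_smul, dotProduct_sub, smul_eq_mul]
  obtain ⟨ℓv, hℓv⟩ := hT v hv
  obtain ⟨ℓw, hℓw⟩ := hT w hw
  have h1 := hℓv a ha (Ne.symm hva)
  have h2 := hℓv w hw (Ne.symm hvw)
  have h3 := hℓw a ha (Ne.symm hwa)
  have h4 := hℓw v hv hvw
  rw [hline] at h1 h2 h4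
  have hA : 0 < ℓv ⬝ᵥ w - ℓv ⬝ᵥ a := pos_of_mul_pos_right (by linarith) hμ.le
  have hμ1 : 1 < μ := by nlinarith
  nlinarith

lemma add_smul_dotProduct (g c x : ι → ℝ) (t : ℝ) : (g + t • c) ⬝ᵥ x = g ⬝ᵥ x + t * c ⬝ᵥ x := by
  rw [add_dotProduct, smul_dotProduct, smul_eq_mul]

lemma exists_breakpoint {T : Finset (ι → ℝ)} {g c a v₀ : ι → ℝ}
    (hmax : ∀ v ∈ T, g ⬝ᵥ v ≤ g ⬝ᵥ a) (hv₀ : v₀ ∈ T) (himp : c ⬝ᵥ a < c ⬝ᵥ v₀) :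
    ∃ t : ℝ, 0 ≤ t ∧ (∀ v ∈ T, (g + t • c) ⬝ᵥ v ≤ (g + t • c) ⬝ᵥ a) ∧
      ∃ v ∈ T, c ⬝ᵥ a < c ⬝ᵥ v ∧ (g + t • c) ⬝ᵥ v = (g + t • c) ⬝ᵥ a := by
  set D := T.filter fun v => c ⬝ᵥ a < c ⬝ᵥ v
  let r : (ι → ℝ) → ℝ := fun v => (g ⬝ᵥ a - g ⬝ᵥ v) / (c ⬝ᵥ v - c ⬝ᵥ a)
  obtain ⟨w, hwD, hw⟩ := D.exists_min_image r ⟨v₀, mem_filter.2 ⟨hv₀, himp⟩⟩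
  obtain ⟨hwT, hwc⟩ := mem_filter.1 hwD
  refine ⟨r w, div_nonneg (by linarith [hmax w hwT]) (by linarith), fun v hv => ?_,
    w, hwT, hwc, ?_⟩
  · rw [add_smul_dotProduct, add_smul_dotProduct]
    by_cases hvc : c ⬝ᵥ a < c ⬝ᵥ v
    · have := (le_div_iff₀ (by linarith)).1 (hw v (mem_filter.2 ⟨hv, hvc⟩))
      linarith
    · nlinarith [hmax v hv, div_nonneg (sub_nonneg.2 (hmax w hwT)) (sub_nonneg.2 hwc.le)]
  · rw [add_smul_dotProduct, add_smul_dotProduct]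
    have := div_mul_cancel₀ (g ⬝ᵥ a - g ⬝ᵥ w) (sub_ne_zero.2 hwc.ne')
    linarith

lemma IsExposedEdgeIn.of_face {T : Finset (ι → ℝ)} {g a b : ι → ℝ}
    (hmax : ∀ v ∈ T, g ⬝ᵥ v ≤ g ⬝ᵥ a) (hb : g ⬝ᵥ b = g ⬝ᵥ a)
    (h : IsExposedEdgeIn (T.filter fun v => g ⬝ᵥ v = g ⬝ᵥ a) a b) : IsExposedEdgeIn T a b := by
  obtain ⟨h', hh'b, hh'⟩ := h
  obtain ⟨ε, hε, hεT⟩ := exists_pos_forall_add_mul_neg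
    (S := T.filter fun v => g ⬝ᵥ v ≠ g ⬝ᵥ a) (b := fun v => h' ⬝ᵥ v - h' ⬝ᵥ a)
    (a := fun v => g ⬝ᵥ v - g ⬝ᵥ a)
    fun v hv => sub_neg.2 ((hmax v (mem_filter.1 hv).1).lt_of_ne (mem_filter.1 hv).2)
  refine ⟨g + ε • h', by rw [add_smul_dotProduct, add_smul_dotProduct, hb, hh'b], ?_⟩
  intro v hv hva hvb
  rw [add_smul_dotProduct, add_smul_dotProduct]
  by_cases hgv : g ⬝ᵥ v = g ⬝ᵥ a
  · nlinarith [hh' v (mem_filter.2 ⟨hv, hgv⟩) hva hvb]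
  · linarith [hεT v (mem_filter.2 ⟨hv, hgv⟩)]

/-- The central projections `d v` of the other points from `a` to the hyperplane `c ⬝ᵥ d = 1`
are distinct, and the longest of them exposes itself among them. -/
lemma exists_isExposedEdgeIn_of_forall_lt {T : Finset (ι → ℝ)}
    (hT : ∀ x ∈ T, IsStrictlyExposedIn T x) {a c v₀ : ι → ℝ} (ha : a ∈ T) (hv₀ : v₀ ∈ T)
    (hv₀a : v₀ ≠ a) (hc : ∀ v ∈ T, v ≠ a → c ⬝ᵥ a < c ⬝ᵥ v) :
    ∃ w ∈ T, w ≠ a ∧ IsExposedEdgeIn T a w := by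
  have hpos : ∀ v ∈ T, v ≠ a → 0 < c ⬝ᵥ (v - a) := fun v hv hva => by
    rw [dotProduct_sub]; linarith [hc v hv hva]
  obtain ⟨d, hd⟩ : ∃ d : (ι → ℝ) → ι → ℝ,
      ∀ v ∈ T, v ≠ a → c ⬝ᵥ d v = 1 ∧ v - a = (c ⬝ᵥ (v - a)) • d v :=
    ⟨fun v => (c ⬝ᵥ (v - a))⁻¹ • (v - a), fun v hv hva =>
      ⟨by rw [dotProduct_smul, smul_eq_mul, inv_mul_cancel₀ (hpos v hv hva).ne'],
        by rw [smul_smul, mul_inv_cancel₀ (hpos v hv hva).ne', one_smul]⟩⟩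
  obtain ⟨w, hwE, hw⟩ := (T.erase a).exists_max_image (fun v => d v ⬝ᵥ d v)
    ⟨v₀, mem_erase.2 ⟨hv₀a, hv₀⟩⟩
  obtain ⟨hwa, hwT⟩ := mem_erase.1 hwE
  obtain ⟨hcw, hw_eq⟩ := hd w hwT hwa
  let h : ι → ℝ := d w - (d w ⬝ᵥ d w) • c
  have hsub : ∀ v ∈ T, v ≠ a → h ⬝ᵥ v - h ⬝ᵥ a = c ⬝ᵥ (v - a) * (d w ⬝ᵥ d v - d w ⬝ᵥ d w) :=
    fun v hv hva => by
      obtain ⟨hcv, hv_eq⟩ := hd v hv hva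
      calc h ⬝ᵥ v - h ⬝ᵥ a = h ⬝ᵥ ((c ⬝ᵥ (v - a)) • d v) := by rw [← dotProduct_sub, ← hv_eq]
        _ = _ := by
          rw [dotProduct_smul, smul_eq_mul, sub_dotProduct, smul_dotProduct, smul_eq_mul, hcv,
            mul_one]
  refine ⟨w, hwT, hwa, h, sub_eq_zero.1 ?_, fun v hv hva hvw => sub_neg.1 ?_⟩
  · rw [hsub w hwT hwa, sub_self, mul_zero]
  · have hne : d v ≠ d w := fun hdvw => hvw <| by
      refine eq_of_sub_eq_smul_sub hT ha hv hwT
        (div_pos (hpos v hv hva) (hpos w hwT hwa)) ?_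
      calc v - a = (c ⬝ᵥ (v - a)) • d w := by rw [← hdvw]; exact (hd v hv hva).2
        _ = (c ⬝ᵥ (v - a) / c ⬝ᵥ (w - a)) • (c ⬝ᵥ (w - a)) • d w := by
          rw [smul_smul, div_mul_cancel₀ _ (hpos w hwT hwa).ne']
        _ = _ := by rw [← hw_eq]
    rw [hsub v hv hva]
    exact mul_neg_of_pos_of_neg (hpos v hv hva)
      (sub_neg.2 (dotProduct_lt_dotProduct_self (hw v (mem_erase.2 ⟨hva, hv⟩)) hne))

/-- Tilt a strict exposer of `a` towards `c` up to the first breakpoint: in the face so obtained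
every point other than `a` is `c`-better than `a`. -/
theorem exists_isExposedEdgeIn_of_lt {T : Finset (ι → ℝ)}
    (hT : ∀ x ∈ T, IsStrictlyExposedIn T x) {a c v₀ : ι → ℝ} (ha : a ∈ T) (hv₀ : v₀ ∈ T)
    (himp : c ⬝ᵥ a < c ⬝ᵥ v₀) : ∃ w ∈ T, c ⬝ᵥ a < c ⬝ᵥ w ∧ IsExposedEdgeIn T a w := by
  obtain ⟨ℓ, hℓ⟩ := hT a ha
  have hmax : ∀ v ∈ T, ℓ ⬝ᵥ v ≤ ℓ ⬝ᵥ a := fun v hv => by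
    rcases eq_or_ne v a with rfl | hva
    exacts [le_rfl, (hℓ v hv hva).le]
  obtain ⟨t, ht, hmax', v₁, hv₁, hv₁c, hv₁eq⟩ := exists_breakpoint hmax hv₀ himp
  set F := T.filter fun v => (ℓ + t • c) ⬝ᵥ v = (ℓ + t • c) ⬝ᵥ a
  have hFc : ∀ v ∈ F, v ≠ a → c ⬝ᵥ a < c ⬝ᵥ v := fun v hv hva => by
    obtain ⟨hvT, hveq⟩ := mem_filter.1 hv
    rw [add_smul_dotProduct, add_smul_dotProduct] at hveq
    by_contra! hle
    nlinarith [hℓ v hvT hva]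
  obtain ⟨w, hwF, hwa, hedge⟩ := exists_isExposedEdgeIn_of_forall_lt (T := F)
    (fun x hx => (hT x (mem_filter.1 hx).1).mono (filter_subset _ T))
    (mem_filter.2 ⟨ha, rfl⟩) (mem_filter.2 ⟨hv₁, hv₁eq⟩) (by rintro rfl; exact hv₁c.false) hFc
  exact ⟨w, (mem_filter.1 hwF).1, hFc w hwF hwa, hedge.of_face hmax' (mem_filter.1 hwF).2⟩

lemma exists_pos_forall_add_smul_le {T : Finset (ι → ℝ)} {ℓ a : ι → ℝ}
    (hℓ : ∀ v ∈ T, v ≠ a → ℓ ⬝ᵥ v < ℓ ⬝ᵥ a) (c : ι → ℝ) :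
    ∃ t : ℝ, 0 < t ∧ ∀ v ∈ T, (ℓ + t • c) ⬝ᵥ v ≤ (ℓ + t • c) ⬝ᵥ a := by
  obtain ⟨t, ht, htT⟩ := exists_pos_forall_add_mul_neg (S := T.erase a)
    (a := fun v => ℓ ⬝ᵥ v - ℓ ⬝ᵥ a) (b := fun v => c ⬝ᵥ v - c ⬝ᵥ a)
    fun v hv => sub_neg.2 (hℓ v (mem_erase.1 hv).2 (mem_erase.1 hv).1)
  refine ⟨t, ht, fun v hv => ?_⟩
  rcases eq_or_ne v a with rfl | hva
  · exact le_rfl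
  · rw [add_smul_dotProduct, add_smul_dotProduct]
    linarith [htT v (mem_erase.2 ⟨hva, hv⟩)]

/-- Move along an edge of the optimal face at the next breakpoint of `ℓ + t • c`. -/
lemma exists_shadow_step {V : Finset (ι → ℝ)} (hV : ∀ x ∈ V, IsStrictlyExposedIn V x)
    {ℓ c w v₀ : ι → ℝ} {t : ℝ} (hw : w ∈ V) (ht : 0 < t)
    (hmax : ∀ v ∈ V, (ℓ + t • c) ⬝ᵥ v ≤ (ℓ + t • c) ⬝ᵥ w) (hv₀ : v₀ ∈ V)
    (himp : c ⬝ᵥ w < c ⬝ᵥ v₀) :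
    ∃ w' ∈ V, IsExposedEdgeIn V w w' ∧ c ⬝ᵥ w < c ⬝ᵥ w' ∧ ℓ ⬝ᵥ w' < ℓ ⬝ᵥ w ∧
      ∃ t' : ℝ, 0 < t' ∧ ∀ v ∈ V, (ℓ + t' • c) ⬝ᵥ v ≤ (ℓ + t' • c) ⬝ᵥ w' := by
  obtain ⟨s, hs, hmax', v₁, hv₁, hv₁c, hv₁eq⟩ := exists_breakpoint hmax hv₀ himp
  rw [add_assoc, ← add_smul] at hmax' hv₁eq
  set F := V.filter fun v => (ℓ + (t + s) • c) ⬝ᵥ v = (ℓ + (t + s) • c) ⬝ᵥ w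
  have hwF : w ∈ F := mem_filter.2 ⟨hw, rfl⟩
  obtain ⟨w', hw'F, hc, hedge⟩ := exists_isExposedEdgeIn_of_lt (T := F)
    (fun x hx => (hV x (mem_filter.1 hx).1).mono (filter_subset _ V)) hwF
    (mem_filter.2 ⟨hv₁, hv₁eq⟩) hv₁c
  obtain ⟨hw'V, hw'eq⟩ := mem_filter.1 hw'F
  refine ⟨w', hw'V, hedge.of_face hmax' hw'eq, hc, ?_, t + s, by linarith,
    fun v hv => hw'eq ▸ hmax' v hv⟩
  rw [add_smul_dotProduct, add_smul_dotProduct] at hw'eq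
  nlinarith

theorem exists_shadow_path {V : Finset (ι → ℝ)} (hV : ∀ x ∈ V, IsStrictlyExposedIn V x)
    {ℓ c w : ι → ℝ} {t : ℝ} (hw : w ∈ V) (ht : 0 < t)
    (hmax : ∀ v ∈ V, (ℓ + t • c) ⬝ᵥ v ≤ (ℓ + t • c) ⬝ᵥ w) :
    ∃ (m : ℕ) (p : Fin (m + 1) → ι → ℝ), p 0 = w ∧ (∀ i, p i ∈ V) ∧
      (∀ i : Fin m, IsExposedEdgeIn V (p i.castSucc) (p i.succ) ∧
        c ⬝ᵥ p i.castSucc < c ⬝ᵥ p i.succ ∧ ℓ ⬝ᵥ p i.succ < ℓ ⬝ᵥ p i.castSucc) ∧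
      ∀ v ∈ V, c ⬝ᵥ v ≤ c ⬝ᵥ p (Fin.last m) := by
  by_cases hopt : ∀ v ∈ V, c ⬝ᵥ v ≤ c ⬝ᵥ w
  · exact ⟨0, fun _ => w, rfl, fun _ => hw, fun i => i.elim0, hopt⟩
  push Not at hopt
  obtain ⟨v₀, hv₀, himp⟩ := hopt
  obtain ⟨w', hw', hedge, hc, hℓ, t', ht', hmax'⟩ :=
    exists_shadow_step hV hw ht hmax hv₀ himp
  obtain ⟨m, p, hp0, hpV, hstep, hopt⟩ := exists_shadow_path hV hw' ht' hmax'
  subst hp0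
  refine ⟨m + 1, Fin.cons w p, rfl, Fin.cases hw hpV,
    Fin.rel_cons_castSucc_cons_succ (R := fun x y => IsExposedEdgeIn V x y ∧ c ⬝ᵥ x < c ⬝ᵥ y ∧
      ℓ ⬝ᵥ y < ℓ ⬝ᵥ x) ⟨hedge, hc, hℓ⟩ hstep, ?_⟩
  simpa [← Fin.succ_last] using hopt
termination_by #(V.filter fun v => c ⬝ᵥ w < c ⬝ᵥ v)
decreasing_by
  refine card_lt_card ⟨fun v hv => ?_, fun hsub => ?_⟩
  · exact mem_filter.2 ⟨(mem_filter.1 hv).1, hc.trans (mem_filter.1 hv).2⟩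
  · exact (mem_filter.1 (hsub (mem_filter.2 ⟨hw', hc⟩))).2.false

lemma dotProduct_le_of_mem_convexHull {V : Set (ι → ℝ)} {c : ι → ℝ} {r : ℝ}
    (h : ∀ v ∈ V, c ⬝ᵥ v ≤ r) {x : ι → ℝ} (hx : x ∈ convexHull ℝ V) : c ⬝ᵥ x ≤ r :=
  convexHull_min h (convex_halfSpace_le (dotProductBilin ℝ ℝ c).isLinear r) hx

lemma exists_finset_coe_eq_extremePoints {E : Type*} [NormedAddCommGroup E] [NormedSpace ℝ E]
    {S : Set E} (hS : S.Finite) : ∃ V : Finset E,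
      (V : Set E) = (convexHull ℝ S).extremePoints ℝ ∧ convexHull ℝ S = convexHull ℝ ↑V := by
  have hfin : ((convexHull ℝ S).extremePoints ℝ).Finite :=
    hS.subset extremePoints_convexHull_subset
  refine ⟨hfin.toFinset, hfin.coe_toFinset, ?_⟩
  rw [hfin.coe_toFinset, ← (Set.Finite.isClosed_convexHull ℝ hfin).closure_eq,
    closure_convexHull_extremePoints (hS.isCompact_convexHull (𝕜 := ℝ)) (convex_convexHull ℝ S)]

/-- The exposed face of `convexHull V` cut out by `g` is spanned by the points of `V` on it, by
Krein–Milman; here these are just `a` and `b`. -/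
theorem IsExposedEdgeIn.isExposed_segment {V : Finset (ι → ℝ)} {a b : ι → ℝ} (ha : a ∈ V)
    (hb : b ∈ V) (h : IsExposedEdgeIn V a b) :
    IsExposed ℝ (convexHull ℝ (V : Set (ι → ℝ))) (segment ℝ a b) := by
  obtain ⟨g, hgb, hg⟩ := h
  set A := convexHull ℝ (V : Set (ι → ℝ))
  let l : StrongDual ℝ (ι → ℝ) := LinearMap.toContinuousLinearMap (dotProductBilin ℝ ℝ g)
  have hle : ∀ x ∈ A, l x ≤ l a := fun x => dotProduct_le_of_mem_convexHull fun v hv => by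
    rcases eq_or_ne v a with rfl | hva
    · exact le_rfl
    rcases eq_or_ne v b with rfl | hvb
    exacts [hgb.le, (hg v hv hva hvb).le]
  have hseg : segment ℝ a b ⊆ A ∩ {x | l x = l a} :=
    ((convex_convexHull ℝ _).inter (convex_hyperplane l.toLinearMap.isLinear _)).segment_subset
      ⟨subset_convexHull ℝ _ ha, rfl⟩ ⟨subset_convexHull ℝ _ hb, hgb⟩
  refine fun _ => ⟨l, Subset.antisymm
    (fun x hx => ⟨(hseg hx).1, fun y hy => (hle y hy).trans (hseg hx).2.ge⟩) ?_⟩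
  have hB : IsExposed ℝ A {x ∈ A | ∀ y ∈ A, l y ≤ l x} := fun _ => ⟨l, rfl⟩
  rw [← closure_convexHull_extremePoints
    (hB.isCompact (V.finite_toSet.isCompact_convexHull (𝕜 := ℝ)))
    (hB.convex (convex_convexHull ℝ _)), ← convexHull_pair]
  refine closure_minimal (convexHull_mono fun e he => ?_)
    (Set.Finite.isClosed_convexHull ℝ (toFinite _))
  have heV : e ∈ V :=
    extremePoints_convexHull_subset (hB.isExtreme.extremePoints_subset_extremePoints he)
  by_contra hne
  simp only [mem_insert_iff, mem_singleton_iff, not_or] at hne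
  exact (hg e heV hne.1 hne.2).not_ge (he.1.2 a (subset_convexHull ℝ _ ha))

lemma isMonotonePath_of_isExposedEdgeIn {n : ℕ} {P : Set (Fin n → ℝ)} {V : Finset (Fin n → ℝ)}
    (hV : (V : Set (Fin n → ℝ)) = P.extremePoints ℝ) (hPV : P = convexHull ℝ ↑V)
    {c : Fin n → ℝ} {m : ℕ} {p : Fin (m + 1) → Fin n → ℝ} (hpV : ∀ i, p i ∈ V)
    (hp : ∀ i : Fin m, IsExposedEdgeIn V (p i.castSucc) (p i.succ) ∧
      c ⬝ᵥ p i.castSucc < c ⬝ᵥ p i.succ) :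
    IsMonotonePath P c m p := by
  have hvert : ∀ i, IsVertexOf P (p i) := fun i => by
    rw [IsVertexOf, ← hV]; exact hpV i
  refine ⟨hvert, fun i => ⟨⟨fun h => (hp i).2.ne (congrArg _ h), hvert _, hvert _, ?_⟩, (hp i).2⟩⟩
  rw [hPV]
  exact (hp i).1.isExposed_segment (hpV _) (hpV _)

end ConvexPosition

section HalfIntegral

variable {ι : Type*}

def IsHalfIntegral (v : ι → ℝ) : Prop := ∀ i, v i = 0 ∨ v i = 1 / 2 ∨ v i = 1

lemma IsHalfIntegral.exists_int_two_mul {v : ι → ℝ} (hv : IsHalfIntegral v) (i : ι) :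
    ∃ k : ℤ, 2 * v i = k := by
  rcases hv i with h | h | h
  exacts [⟨0, by simp [h]⟩, ⟨1, by simp [h]⟩, ⟨2, by simp [h]⟩]

lemma IsHalfIntegral.exists_int_four_mul_dotProduct [Fintype ι] {u v : ι → ℝ}
    (hu : IsHalfIntegral u) (hv : IsHalfIntegral v) :
    ∃ k : ℤ, 4 * ((u - fun _ : ι => (1 / 2 : ℝ)) ⬝ᵥ v) = k := by
  have hterm : ∀ i, ∃ k : ℤ, 4 * ((u i - 1 / 2) * v i) = k := fun i => by
    obtain ⟨k, hk⟩ := hu.exists_int_two_mul i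
    obtain ⟨l, hl⟩ := hv.exists_int_two_mul i
    exact ⟨(k - 1) * l, by push_cast; rw [← hk, ← hl]; ring⟩
  choose k hk using hterm
  exact ⟨∑ i, k i, by simp only [dotProduct, Pi.sub_apply, Finset.mul_sum, hk, Int.cast_sum]⟩

lemma IsHalfIntegral.sub_half_dotProduct_self [Fintype ι] {v : ι → ℝ}
    (hv : IsHalfIntegral v) :
    (v - fun _ : ι => (1 / 2 : ℝ)) ⬝ᵥ (v - fun _ : ι => (1 / 2 : ℝ)) =
      (Fintype.card ι - #{i | v i = 1 / 2}) / 4 := by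
  have hterm : ∀ i, (v i - 1 / 2) * (v i - 1 / 2) = (1 - if v i = 1 / 2 then 1 else 0) / 4 :=
    fun i => by rcases hv i with h | h | h <;> norm_num [h]
  simp only [dotProduct, Pi.sub_apply, hterm, ← Finset.sum_div, Finset.sum_sub_distrib,
    Finset.sum_boole, Finset.sum_const, card_univ, nsmul_eq_mul, mul_one]

lemma add_quarter_le_of_lt {x y : ℝ} (hx : ∃ k : ℤ, 4 * x = k) (hy : ∃ k : ℤ, 4 * y = k)
    (hxy : x < y) : x + 1 / 4 ≤ y := by
  obtain ⟨k, hk⟩ := hx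
  obtain ⟨l, hl⟩ := hy
  have hkl : k < l := by exact_mod_cast (by linarith : (k : ℝ) < l)
  have : (k : ℝ) + 1 ≤ l := by exact_mod_cast hkl
  linarith

end HalfIntegral

/-- **Proposition (sparse half-integral bound).**
Let `P ⊆ ℝ^n` be a half-integral polytope of dimension `d`, and suppose there is
an integer `s` such that every vertex of `P` has exactly `n − s` coordinates equal
to `1/2`. Then for every `c ∈ ℝ^n` and every vertex `u` of `P` there is a
`c`-monotone path of length at most `2s` from `u` to a vertex maximizing `cᵀx`
over `P`. -/
theorem half_integral_sparse_monotone_path {n : ℕ} (P : Set (Fin n → ℝ))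
    (hP : IsPolytope P)
    (hhalf : ∀ v, IsVertexOf P v → ∀ i, v i = 0 ∨ v i = 1 / 2 ∨ v i = 1)
    (s : ℕ) (hs : s ≤ n)
    (hsupp : ∀ v, IsVertexOf P v →
      (Finset.univ.filter fun i => v i = 1 / 2).card = n - s)
    (c : Fin n → ℝ) (u : Fin n → ℝ) (hu : IsVertexOf P u) :
    ∃ (m : ℕ) (p : Fin (m + 1) → (Fin n → ℝ)),
      m ≤ 2 * s ∧
      IsMonotonePath P c m p ∧
      p 0 = u ∧
      (∀ x ∈ P, dotp c x ≤ dotp c (p (Fin.last m))) := by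
  obtain ⟨S, -, rfl⟩ := hP
  obtain ⟨V, hVext, hPV⟩ := exists_finset_coe_eq_extremePoints S.finite_toSet
  have hV : ∀ v, v ∈ V ↔ IsVertexOf (convexHull ℝ ↑S) v := fun v => by
    rw [IsVertexOf, ← hVext, Finset.mem_coe]
  have hhalf' : ∀ v ∈ V, IsHalfIntegral v := fun v hv => hhalf v ((hV v).1 hv)
  have huV := (hV u).2 hu
  set q : Fin n → ℝ := fun _ => 1 / 2
  have hsph : ∀ v ∈ V, (v - q) ⬝ᵥ (v - q) = (s / 4 : ℝ) := fun v hv => by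
    rw [(hhalf' v hv).sub_half_dotProduct_self, hsupp v ((hV v).1 hv), Fintype.card_fin,
      Nat.cast_sub hs]
    ring
  obtain ⟨t, ht, hmax⟩ :=
    exists_pos_forall_add_smul_le (fun v hv => dotProduct_lt_of_sphere hsph huV hv) c
  obtain ⟨m, p, hp0, hpV, hstep, hopt⟩ :=
    exists_shadow_path (fun x hx => ⟨x - q, fun v hv => dotProduct_lt_of_sphere hsph hx hv⟩)
      huV ht hmax
  have hquarter : ∀ i, ∃ k : ℤ, 4 * ((u - q) ⬝ᵥ p i) = k := fun i =>
    (hhalf' u huV).exists_int_four_mul_dotProduct (hhalf' _ (hpV i))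
  have hlen := Fin.add_mul_le_of_forall_succ (f := fun i => (u - q) ⬝ᵥ p i) (δ := 1 / 4)
    fun i => add_quarter_le_of_lt (hquarter _) (hquarter _) (hstep i).2.2
  have hrange := dotProduct_sub_le_of_sphere (hsph u huV) (hsph _ (hpV (Fin.last m)))
  refine ⟨m, p, ?_, isMonotonePath_of_isExposedEdgeIn hVext hPV hpV
    fun i => ⟨(hstep i).1, (hstep i).2.1⟩, hp0, fun x hx => ?_⟩
  · simp only [hp0] at hlen
    exact_mod_cast (by linarith : (m : ℝ) ≤ 2 * s)
  · exact dotProduct_le_of_mem_convexHull hopt (hPV ▸ hx)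
end

section
/- Let P ⊆ ℝ^n be a (0,k)-lattice polytope of dimension d, let σ = (π, ε) be a signed permutation of [n], let α ≥ 2k+1 be real, and let x_σ ∈ ℝ^n be the associated vector. Let v_0, v_1, …, v_m be a sequence of vertices of P such that for each i < m, the vertex v_{i+1} is a neighbor of v_i with x_σᵀv_{i+1} > x_σᵀv_i and x_σᵀv_{i+1} ≥ x_σᵀw for every neighbor w of v_i (a greatest-improvement step), and such that v_m has no neighbor w with x_σᵀw > x_σᵀv_m. Then v_m is the unique vertex maximizing x ↦ x_σᵀx over P and m ≤ dk. -/
open Set Finset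

/-- A `(0,k)`-lattice polytope: a polytope all of whose vertices lie in
`ℤ^n ∩ [0,k]^n`. -/
def IsLatticePolytope {n : ℕ} (k : ℕ) (P : Set (Fin n → ℝ)) : Prop :=
  IsPolytope P ∧ ∀ v, IsVertexOf P v → ∀ i, (∃ z : ℤ, v i = (z : ℝ)) ∧ 0 ≤ v i ∧ v i ≤ (k : ℝ)

/-- The vector `x_σ` associated to a signed permutation `σ = (π, ε)` of `[n]` and
a real number `α`, with `(x_σ)_i = ε(i)·α^{π(i)}` where `π(i)` ranges over `{1,…,n}`. -/
def signedPermVec {n : ℕ} (π : Equiv.Perm (Fin n)) (ε : Fin n → ℝ) (α : ℝ) : Fin n → ℝ :=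
  fun i => ε i * α ^ ((π i : ℕ) + 1)

/-!
A vertex of a polytope that does not maximise a linear functional `l` has an `l`-improving
neighbour, so a greatest-improvement path can only stop at a maximiser. Since `α ≥ k + 1`, comparing
`x_σ`-values of points of `{0, …, k}ⁿ` is lexicographic in the coordinates ordered by `π` (with
signs `ε`); in particular the maximiser is unique.

The length bound is by induction on the dimension. Let `a` be the coordinate of largest `π`-rank
on which the vertices of `P` are not constant. By the lexicographic comparison `ε a * x a` never
decreases along the path, so among the first `k + 1` steps one leaves it unchanged. Greatest
improvement forces the vertex before that step to maximise `ε a * x a` over `P`; from then on the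
path stays in the face where `ε a * x a` is maximal, which has smaller dimension.
-/

theorem exists_pos_forall_mul_lt {ι : Type*} (T : Finset ι) (b g : ι → ℝ)
    (hg : ∀ i ∈ T, 0 < g i) : ∃ δ > 0, ∀ i ∈ T, δ * b i < g i := by
  have hsmall : ∀ᶠ δ in nhds (0 : ℝ), ∀ i ∈ T, δ * b i < g i :=
    (Filter.eventually_all_finset T).2 fun i hi =>
      ((continuous_id.mul continuous_const).tendsto' 0 0 (zero_mul _)).eventually
        (gt_mem_nhds (hg i hi))
  obtain ⟨δ, hδ, hpos⟩ :=
    ((hsmall.filter_mono nhdsWithin_le_nhds).and (self_mem_nhdsWithin (s := Ioi 0))).exists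
  exact ⟨δ, hpos, hδ⟩

section Faces

variable {E : Type*} [NormedAddCommGroup E] [NormedSpace ℝ E]

theorem StrongDual.le_of_mem_convexHull {l : StrongDual ℝ E} {s : Set E} {M : ℝ}
    (hs : ∀ y ∈ s, l y ≤ M) {x : E} (hx : x ∈ convexHull ℝ s) : l x ≤ M :=
  convexHull_min hs (convex_halfSpace_le l.toLinearMap.isLinear M) hx

noncomputable def argmaxSet (S : Finset E) (l : StrongDual ℝ E) : Finset E := by
  classical exact S.filter fun s => ∀ t ∈ S, l t ≤ l s

theorem mem_argmaxSet {S : Finset E} {l : StrongDual ℝ E} {s : E} :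
    s ∈ argmaxSet S l ↔ s ∈ S ∧ ∀ t ∈ S, l t ≤ l s := by
  unfold argmaxSet; exact Finset.mem_filter

theorem argmaxSet_subset (S : Finset E) (l : StrongDual ℝ E) : argmaxSet S l ⊆ S :=
  fun _ hs => (mem_argmaxSet.1 hs).1

theorem argmaxSet_nonempty {S : Finset E} (hS : S.Nonempty) (l : StrongDual ℝ E) :
    (argmaxSet S l).Nonempty := by
  obtain ⟨s, hs, hmax⟩ := S.exists_max_image l hS
  exact ⟨s, mem_argmaxSet.2 ⟨hs, hmax⟩⟩

theorem toExposed_convexHull (S : Finset E) (l : StrongDual ℝ E) :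
    l.toExposed (convexHull ℝ (S : Set E)) = convexHull ℝ (argmaxSet S l : Set E) := by
  have hP : IsCompact (convexHull ℝ (S : Set E)) := S.finite_toSet.isCompact_convexHull ℝ
  have hF : IsExposed ℝ (convexHull ℝ (S : Set E)) (l.toExposed (convexHull ℝ (S : Set E))) :=
    ContinuousLinearMap.toExposed.isExposed
  apply Set.Subset.antisymm
  · rw [← closure_convexHull_extremePoints (hF.isCompact hP) (hF.convex (convex_convexHull ℝ _))]
    refine closure_minimal (convexHull_mono fun x hx => ?_)
      ((argmaxSet S l).finite_toSet.isClosed_convexHull ℝ)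
    have hxS : x ∈ S := extremePoints_convexHull_subset
      (hF.isExtreme.extremePoints_subset_extremePoints hx)
    exact mem_argmaxSet.2
      ⟨hxS, fun t ht => (extremePoints_subset hx).2 t (subset_convexHull ℝ _ ht)⟩
  · refine convexHull_min (fun s hs => ?_) (hF.convex (convex_convexHull ℝ _))
    obtain ⟨hsS, hmax⟩ := mem_argmaxSet.1 hs
    exact ⟨subset_convexHull ℝ _ hsS, fun y hy => l.le_of_mem_convexHull hmax hy⟩

theorem mem_toExposed_of_le {A : Set E} {l : StrongDual ℝ E} {x y : E}
    (hx : x ∈ l.toExposed A) (hy : y ∈ A) (hxy : l x ≤ l y) : y ∈ l.toExposed A :=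
  ⟨hy, fun z hz => (hx.2 z hz).trans hxy⟩

theorem argmaxSet_apply_eq {S : Finset E} {l : StrongDual ℝ E} {s t : E}
    (hs : s ∈ argmaxSet S l) (ht : t ∈ argmaxSet S l) : l s = l t :=
  le_antisymm ((mem_argmaxSet.1 ht).2 s (mem_argmaxSet.1 hs).1)
    ((mem_argmaxSet.1 hs).2 t (mem_argmaxSet.1 ht).1)

/-- A face of a face is a face: perturb `l` by a small multiple of `l'`. -/
theorem exists_argmaxSet_eq_argmaxSet_argmaxSet (S : Finset E) (l l' : StrongDual ℝ E) :
    ∃ l'' : StrongDual ℝ E, argmaxSet S l'' = argmaxSet (argmaxSet S l) l' := by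
  classical
  rcases S.eq_empty_or_nonempty with rfl | hS
  · refine ⟨0, ?_⟩
    rw [Finset.subset_empty.1 (argmaxSet_subset _ _),
      Finset.subset_empty.1 ((argmaxSet_subset _ _).trans (argmaxSet_subset _ _))]
  set T := argmaxSet S l
  obtain ⟨t, ht⟩ := argmaxSet_nonempty (argmaxSet_nonempty hS l) l'
  have htT : t ∈ T := argmaxSet_subset _ _ ht
  have hgap : ∀ s ∈ S \ T, 0 < l t - l s := by
    intro s hs
    obtain ⟨hsS, hsT⟩ := Finset.mem_sdiff.1 hs
    by_contra! h
    exact hsT (mem_argmaxSet.2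
      ⟨hsS, fun u hu => ((mem_argmaxSet.1 htT).2 u hu).trans (sub_nonpos.1 h)⟩)
  obtain ⟨δ, hδ, hδs⟩ :=
    exists_pos_forall_mul_lt (S \ T) (fun s => l' s - l' t) (fun s => l t - l s) hgap
  have hout : ∀ s ∈ S, s ∉ T → l s + δ * l' s < l t + δ * l' t := fun s hs hsT => by
    linarith [hδs s (Finset.mem_sdiff.2 ⟨hs, hsT⟩)]
  refine ⟨l + δ • l', Finset.ext fun s => ?_⟩
  simp only [mem_argmaxSet, add_apply, FunLike.coe_smul, Pi.smul_apply, smul_eq_mul]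
  constructor
  · rintro ⟨hsS, hmax⟩
    have hsT : s ∈ T := by
      by_contra hsT
      exact (hout s hsS hsT).not_ge (hmax t (argmaxSet_subset _ _ htT))
    have hlt : l' t ≤ l' s := by
      have := hmax t (argmaxSet_subset _ _ htT)
      rw [argmaxSet_apply_eq htT hsT] at this
      exact le_of_mul_le_mul_left (by linarith) hδ
    exact ⟨hsT, fun u hu => ((mem_argmaxSet.1 ht).2 u hu).trans hlt⟩
  · rintro ⟨hsT, hmax⟩
    refine ⟨argmaxSet_subset _ _ hsT, fun u hu => ?_⟩
    have hts : l t = l s := argmaxSet_apply_eq htT hsT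
    by_cases huT : u ∈ T
    · rw [argmaxSet_apply_eq huT hsT]
      nlinarith [hmax u huT]
    · nlinarith [hout u hu huT, hmax t htT]

theorem exists_dual_lt_of_mem_extremePoints {S : Finset E} {v : E}
    (hv : v ∈ (convexHull ℝ (S : Set E)).extremePoints ℝ) :
    ∃ f : StrongDual ℝ E, ∀ s ∈ S, s ≠ v → f s < f v := by
  classical
  have hvS : v ∉ convexHull ℝ (S.erase v : Set E) := fun h =>
    ((convex_convexHull ℝ _).mem_extremePoints_iff_mem_sdiff_convexHull_sdiff.1 hv).2
      (convexHull_mono (fun s hs => show s ∈ convexHull ℝ (S : Set E) \ {v} from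
        ⟨subset_convexHull ℝ _ (Finset.mem_of_mem_erase hs), Finset.ne_of_mem_erase hs⟩) h)
  obtain ⟨f, u, hfs, hfv⟩ := geometric_hahn_banach_closed_point (convex_convexHull ℝ _)
    ((S.erase v).finite_toSet.isClosed_convexHull ℝ) hvS
  exact ⟨f, fun s hs hsv =>
    (hfs s (subset_convexHull ℝ _ (Finset.mem_erase.2 ⟨hsv, hs⟩))).trans hfv⟩

noncomputable def relSlope (f u : StrongDual ℝ E) (v s : E) : ℝ := (u s - u v) / (f v - f s)

theorem add_smul_sub_eq_of_forall_relSlope_eq {f : StrongDual ℝ E} {v w s : E} (hw : f w < f v)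
    (hs : f s < f v) (hslope : ∀ u : StrongDual ℝ E, relSlope f u v s = relSlope f u v w) :
    v + ((f v - f s) / (f v - f w)) • (w - v) = s := by
  rw [← sub_eq_zero]
  refine SeparatingDual.eq_zero_of_forall_dual_eq_zero (R := ℝ) fun u => ?_
  have hdw : 0 < f v - f w := sub_pos.2 hw
  have h := hslope u
  rw [relSlope, relSlope, div_eq_div_iff (sub_pos.2 hs).ne' hdw.ne'] at h
  simp only [map_sub, map_add, map_smul, smul_eq_mul]
  field_simp
  linear_combination -h

/-- Tilting `u` by `f` until `v` becomes a maximiser exposes the face spanned by `v` and the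
points of steepest `u`-slope. -/
theorem exists_argmaxSet_relSlope {S : Finset E} {v : E} (hv : v ∈ S) {f : StrongDual ℝ E}
    (hf : ∀ s ∈ S, s ≠ v → f s < f v) (u : StrongDual ℝ E) {s₁ s₂ : E}
    (hs₁ : s₁ ∈ S) (hs₁v : s₁ ≠ v) (hs₂ : s₂ ∈ S) (hs₂v : s₂ ≠ v)
    (hne : relSlope f u v s₁ ≠ relSlope f u v s₂) :
    ∃ l : StrongDual ℝ E, v ∈ argmaxSet S l ∧ argmaxSet S l ≠ S ∧
      ∃ s ∈ argmaxSet S l, s ≠ v ∧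
        ∀ s' ∈ S, s' ≠ v → relSlope f u v s' ≤ relSlope f u v s := by
  classical
  obtain ⟨s, hs, hmax⟩ := (S.erase v).exists_max_image (relSlope f u v)
    ⟨s₁, Finset.mem_erase.2 ⟨hs₁v, hs₁⟩⟩
  obtain ⟨hsv, hsS⟩ := Finset.mem_erase.1 hs
  replace hmax : ∀ x ∈ S, x ≠ v → relSlope f u v x ≤ relSlope f u v s :=
    fun x hx hxv => hmax x (Finset.mem_erase.2 ⟨hxv, hx⟩)
  set l := u + relSlope f u v s • f
  have hpos : ∀ x ∈ S, x ≠ v → 0 < f v - f x := fun x hx hxv => sub_pos.2 (hf x hx hxv)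
  have hdiff : ∀ x ∈ S, x ≠ v →
      l x - l v = (f v - f x) * (relSlope f u v x - relSlope f u v s) := by
    intro x hx hxv
    have hd := (hpos x hx hxv).ne'
    simp only [l, relSlope, add_apply, FunLike.coe_smul, Pi.smul_apply, smul_eq_mul]
    field_simp
    ring
  have hle : ∀ x ∈ S, l x ≤ l v := by
    intro x hx
    by_cases hxv : x = v
    · rw [hxv]
    nlinarith [hdiff x hx hxv, hpos x hx hxv, hmax x hx hxv]
  have hvl : v ∈ argmaxSet S l := mem_argmaxSet.2 ⟨hv, hle⟩
  refine ⟨l, hvl, fun hall => ?_, s, ?_, hsv, hmax⟩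
  · obtain ⟨x, hx, hxv, hxlt⟩ : ∃ x ∈ S, x ≠ v ∧ relSlope f u v x < relSlope f u v s := by
      by_contra! h
      exact hne ((le_antisymm (hmax s₁ hs₁ hs₁v) (h s₁ hs₁ hs₁v)).trans
        (le_antisymm (h s₂ hs₂ hs₂v) (hmax s₂ hs₂ hs₂v)))
    have := argmaxSet_apply_eq (hall ▸ hx) hvl
    nlinarith [hdiff x hx hxv, hpos x hx hxv]
  · refine mem_argmaxSet.2 ⟨hsS, fun x hx => (hle x hx).trans ?_⟩
    linarith [hdiff s hsS hsv]

theorem finrank_direction_toExposed_lt [FiniteDimensional ℝ E] {A : Set E} {l : StrongDual ℝ E}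
    (hne : (l.toExposed A).Nonempty) (hl : ∃ x ∈ A, ∃ y ∈ A, l x ≠ l y) :
    Module.finrank ℝ (affineSpan ℝ (l.toExposed A)).direction
      < Module.finrank ℝ (affineSpan ℝ A).direction := by
  obtain ⟨x₀, hx₀⟩ := hne
  have hconst : l '' l.toExposed A ⊆ {l x₀} := by
    rintro _ ⟨y, hy, rfl⟩
    exact le_antisymm (hx₀.2 y hy.1) (hy.2 x₀ hx₀.1)
  obtain ⟨z, hzA, hz⟩ : ∃ z ∈ A, l z ≠ l x₀ := by
    obtain ⟨x, hx, y, hy, hxy⟩ := hl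
    by_cases hxx : l x = l x₀
    · exact ⟨y, hy, fun h => hxy (hxx.trans h.symm)⟩
    · exact ⟨x, hx, hxx⟩
  have hle : affineSpan ℝ (l.toExposed A) ≤ affineSpan ℝ A :=
    affineSpan_mono ℝ (Set.sep_subset _ _)
  refine (Submodule.finrank_mono (AffineSubspace.direction_le hle)).lt_of_ne fun hdim => hz ?_
  have hspan : affineSpan ℝ (l.toExposed A) = affineSpan ℝ A :=
    AffineSubspace.eq_of_direction_eq_of_nonempty_of_le
      (Submodule.eq_of_le_of_finrank_eq (AffineSubspace.direction_le hle) hdim)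
      ⟨x₀, mem_affineSpan ℝ hx₀⟩ hle
  have hzspan : l z ∈ (affineSpan ℝ (l.toExposed A)).map (l : E →ₗ[ℝ] ℝ).toAffineMap :=
    AffineSubspace.mem_map_of_mem _ (hspan ▸ mem_affineSpan ℝ hzA)
  rw [AffineSubspace.map_span] at hzspan
  exact (AffineSubspace.mem_affineSpan_singleton ℝ ℝ).1 (affineSpan_mono ℝ hconst hzspan)

end Faces

section Edges

variable {n : ℕ}

theorem IsEdgeOf.of_subset {P F : Set (Fin n → ℝ)} {u w : Fin n → ℝ} (h : IsEdgeOf P u w)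
    (hFP : F ⊆ P) (hF : Convex ℝ F) (hu : u ∈ F) (hw : w ∈ F) : IsEdgeOf F u w :=
  ⟨h.1, inter_extremePoints_subset_extremePoints_of_subset hFP ⟨hu, h.2.1⟩,
    inter_extremePoints_subset_extremePoints_of_subset hFP ⟨hw, h.2.2.1⟩,
    h.2.2.2.mono hFP (hF.segment_subset hu hw)⟩

theorem IsEdgeOf.of_toExposed {S : Finset (Fin n → ℝ)} {l : StrongDual ℝ (Fin n → ℝ)}
    {u w : Fin n → ℝ} (h : IsEdgeOf (l.toExposed (convexHull ℝ (S : Set (Fin n → ℝ)))) u w) :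
    IsEdgeOf (convexHull ℝ (S : Set (Fin n → ℝ))) u w := by
  obtain ⟨hne, hu, hw, hexp⟩ := h
  have hext := (ContinuousLinearMap.toExposed.isExposed (𝕜 := ℝ) (l := l)
    (A := convexHull ℝ (S : Set (Fin n → ℝ)))).isExtreme
  refine ⟨hne, hext.extremePoints_subset_extremePoints hu,
    hext.extremePoints_subset_extremePoints hw, fun hseg => ?_⟩
  obtain ⟨l', hl'⟩ := hexp hseg
  obtain ⟨l'', hl''⟩ := exists_argmaxSet_eq_argmaxSet_argmaxSet S l l'
  refine ⟨l'', ?_⟩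
  change segment ℝ u w = l'.toExposed _ at hl'
  change segment ℝ u w = l''.toExposed _
  rw [hl', toExposed_convexHull, toExposed_convexHull, toExposed_convexHull, hl'']

/-- When all points of `S` lie on a ray from `v`, the polytope is the segment from `v` to the
farthest of them. -/
theorem isEdgeOf_of_forall_relSlope_eq {S : Finset (Fin n → ℝ)} {v w : Fin n → ℝ}
    (hv : IsVertexOf (convexHull ℝ (S : Set (Fin n → ℝ))) v) {f : StrongDual ℝ (Fin n → ℝ)}
    (hf : ∀ s ∈ S, s ≠ v → f s < f v) (hw : w ∈ S) (hwv : w ≠ v) (hwmin : ∀ s ∈ S, f w ≤ f s)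
    (hslope : ∀ u : StrongDual ℝ (Fin n → ℝ), ∀ s ∈ S, s ≠ v →
      relSlope f u v s = relSlope f u v w) :
    IsEdgeOf (convexHull ℝ (S : Set (Fin n → ℝ))) v w := by
  have hvS : v ∈ S := extremePoints_convexHull_subset hv
  have hdw : 0 < f v - f w := sub_pos.2 (hf w hw hwv)
  have hray : ∀ s ∈ S, v + ((f v - f s) / (f v - f w)) • (w - v) = s := by
    intro s hs
    by_cases hsv : s = v
    · simp [hsv]
    exact add_smul_sub_eq_of_forall_relSlope_eq (hf w hw hwv) (hf s hs hsv)
      fun u => hslope u s hs hsv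
  have hseg : convexHull ℝ (S : Set (Fin n → ℝ)) = segment ℝ v w := by
    refine Set.Subset.antisymm (convexHull_min (fun s hs => ?_) (convex_segment v w))
      (segment_subset_convexHull (Finset.mem_coe.2 hvS) (Finset.mem_coe.2 hw))
    have hfs : f s ≤ f v := by
      by_cases hsv : s = v
      · rw [hsv]
      · exact (hf s hs hsv).le
    rw [segment_eq_image']
    exact ⟨_, ⟨div_nonneg (by linarith) hdw.le, (div_le_one hdw).2 (by linarith [hwmin s hs])⟩,
      hray s hs⟩
  have hexposed : argmaxSet S (-f) = {w} := by
    ext s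
    simp only [mem_argmaxSet, Finset.mem_singleton, neg_apply, neg_le_neg_iff]
    constructor
    · rintro ⟨hs, hmin⟩
      rw [← hray s hs, le_antisymm (hmin w hw) (hwmin s hs), div_self hdw.ne', one_smul,
        add_sub_cancel]
    · rintro rfl
      exact ⟨hw, hwmin⟩
  have hwext : IsVertexOf (convexHull ℝ (S : Set (Fin n → ℝ))) w := by
    have := (ContinuousLinearMap.toExposed.isExposed (𝕜 := ℝ) (l := -f)
      (A := convexHull ℝ (S : Set (Fin n → ℝ)))).isExtreme
    rwa [toExposed_convexHull, hexposed, Finset.coe_singleton, convexHull_singleton,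
      isExtreme_singleton] at this
  exact ⟨hwv.symm, hv, hwext, hseg ▸ IsExposed.refl _⟩

/-- If no proper face through `v` contains an improving point, `S` lies on a ray from `v`. -/
theorem exists_improving_face_or_isEdgeOf {S : Finset (Fin n → ℝ)} {v : Fin n → ℝ}
    (hv : IsVertexOf (convexHull ℝ (S : Set (Fin n → ℝ))) v) {l : StrongDual ℝ (Fin n → ℝ)}
    {s₀ : Fin n → ℝ} (hs₀ : s₀ ∈ S) (hls₀ : l v < l s₀) :
    (∃ l', v ∈ argmaxSet S l' ∧ argmaxSet S l' ≠ S ∧ ∃ s ∈ argmaxSet S l', l v < l s) ∨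
      ∃ w, IsEdgeOf (convexHull ℝ (S : Set (Fin n → ℝ))) v w ∧ l v < l w := by
  have hvS : v ∈ S := extremePoints_convexHull_subset hv
  have hs₀v : s₀ ≠ v := by rintro rfl; exact lt_irrefl _ hls₀
  obtain ⟨f, hf⟩ := exists_dual_lt_of_mem_extremePoints hv
  have hslope_pos : ∀ s ∈ S, s ≠ v → (0 < relSlope f l v s ↔ l v < l s) := fun s hs hsv => by
    rw [relSlope, div_pos_iff_of_pos_right (sub_pos.2 (hf s hs hsv)), sub_pos]
  have hs₀pos := (hslope_pos s₀ hs₀ hs₀v).2 hls₀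
  by_cases hray : ∀ u : StrongDual ℝ (Fin n → ℝ), ∀ s ∈ S, s ≠ v → ∀ s' ∈ S, s' ≠ v →
      relSlope f u v s = relSlope f u v s'
  · obtain ⟨w, hw, hwmin⟩ := S.exists_min_image f ⟨v, hvS⟩
    have hwv : w ≠ v := fun h => (hf s₀ hs₀ hs₀v).not_ge (h ▸ hwmin s₀ hs₀)
    refine .inr ⟨w, isEdgeOf_of_forall_relSlope_eq hv hf hw hwv hwmin
      fun u s hs hsv => hray u s hs hsv w hw hwv, ?_⟩
    rw [← hslope_pos w hw hwv, ← hray l s₀ hs₀ hs₀v w hw hwv]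
    exact hs₀pos
  push Not at hray
  obtain ⟨u, s₁, hs₁, hs₁v, s₂, hs₂, hs₂v, hne⟩ := hray
  refine .inl ?_
  by_cases hconst : ∀ s ∈ S, s ≠ v → relSlope f l v s = relSlope f l v s₀
  · -- every point other than `v` improves `l`: any proper face through `v` and another point
    obtain ⟨l', hvl', hne', s, hs, hsv, -⟩ :=
      exists_argmaxSet_relSlope hvS hf u hs₁ hs₁v hs₂ hs₂v hne
    have hsS := argmaxSet_subset _ _ hs
    exact ⟨l', hvl', hne', s, hs, (hslope_pos s hsS hsv).1 (hconst s hsS hsv ▸ hs₀pos)⟩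
  · push Not at hconst
    obtain ⟨s₃, hs₃, hs₃v, hne₃⟩ := hconst
    obtain ⟨l', hvl', hne', s, hs, hsv, hmax⟩ :=
      exists_argmaxSet_relSlope hvS hf l hs₃ hs₃v hs₀ hs₀v hne₃
    exact ⟨l', hvl', hne', s, hs,
      (hslope_pos s (argmaxSet_subset _ _ hs) hsv).1 (hs₀pos.trans_le (hmax s₀ hs₀ hs₀v))⟩

theorem exists_isEdgeOf_lt (S : Finset (Fin n → ℝ)) {v : Fin n → ℝ}
    (hv : IsVertexOf (convexHull ℝ (S : Set (Fin n → ℝ))) v) (l : StrongDual ℝ (Fin n → ℝ))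
    (hl : ∃ s ∈ S, l v < l s) :
    ∃ w, IsEdgeOf (convexHull ℝ (S : Set (Fin n → ℝ))) v w ∧ l v < l w := by
  induction S using Finset.strongInduction with
  | H S ih =>
    obtain ⟨s₀, hs₀, hls₀⟩ := hl
    rcases exists_improving_face_or_isEdgeOf hv hs₀ hls₀ with ⟨l', hvT, hTS, himp⟩ | hedge
    · have hsub := argmaxSet_subset S l'
      have hvT' : IsVertexOf (convexHull ℝ (argmaxSet S l' : Set (Fin n → ℝ))) v :=
        inter_extremePoints_subset_extremePoints_of_subset (convexHull_mono hsub)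
          ⟨subset_convexHull ℝ _ hvT, hv⟩
      obtain ⟨w, hw, hlw⟩ := ih _ (Finset.ssubset_iff_subset_ne.2 ⟨hsub, hTS⟩) hvT' himp
      rw [← toExposed_convexHull] at hw
      exact ⟨w, hw.of_toExposed, hlw⟩
    · exact hedge

theorem IsPolytope.isMaxOn_of_isEdgeOf_le {P : Set (Fin n → ℝ)} (hP : IsPolytope P)
    {v : Fin n → ℝ} (hv : IsVertexOf P v) {l : StrongDual ℝ (Fin n → ℝ)}
    (hloc : ∀ w, IsEdgeOf P v w → l w ≤ l v) : IsMaxOn l P v := by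
  obtain ⟨S, -, rfl⟩ := hP
  intro x hx
  by_contra hlt
  obtain ⟨s, hs, hls⟩ : ∃ s ∈ S, l v < l s := by
    by_contra! h
    exact hlt (l.le_of_mem_convexHull (fun s hs => h s hs) hx)
  obtain ⟨w, hw, hlw⟩ := exists_isEdgeOf_lt S hv l ⟨s, hs, hls⟩
  exact (hloc w hw).not_gt hlw

end Edges

/-- Digits bounded by `k` in base `α ≥ k + 1`: the leading nonzero digit decides the sign. -/
theorem sum_mul_pow_pos {ι : Type*} [Fintype ι] {ρ : ι → ℕ} (hρ : Function.Injective ρ)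
    {k : ℕ} {α : ℝ} (hα : (k : ℝ) + 1 ≤ α) {e : ι → ℝ} (he : ∀ j, |e j| ≤ k) {T : ι}
    (hT : 1 ≤ e T) (hhi : ∀ j, ρ T < ρ j → e j = 0) : 0 < ∑ j, e j * α ^ ρ j := by
  classical
  have hα0 : 0 < α := by linarith [(k.cast_nonneg : (0 : ℝ) ≤ k)]
  set N := ρ T
  have hgeom : (k : ℝ) * ∑ t ∈ Finset.range N, α ^ t < α ^ N := by
    have hsum := geom_sum_mul α N
    have hnonneg : 0 ≤ ∑ t ∈ Finset.range N, α ^ t := Finset.sum_nonneg fun t _ => by positivity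
    nlinarith
  have hterm : ∀ j ∈ Finset.univ.erase T,
      -(if ρ j < N then (k : ℝ) * α ^ ρ j else 0) ≤ e j * α ^ ρ j := by
    intro j hj
    split_ifs with hjN
    · have := neg_le_of_abs_le (he j)
      have : 0 < α ^ ρ j := by positivity
      nlinarith
    · have hNj : N < ρ j := lt_of_le_of_ne (not_lt.1 hjN)
        fun h => Finset.ne_of_mem_erase hj (hρ h).symm
      simp [hhi j hNj]
  have hlow : ∑ j ∈ Finset.univ.erase T, (if ρ j < N then (k : ℝ) * α ^ ρ j else 0)
      ≤ (k : ℝ) * ∑ t ∈ Finset.range N, α ^ t := by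
    calc ∑ j ∈ Finset.univ.erase T, (if ρ j < N then (k : ℝ) * α ^ ρ j else 0)
        ≤ ∑ j, (if ρ j < N then (k : ℝ) * α ^ ρ j else 0) :=
          Finset.sum_le_sum_of_subset_of_nonneg (Finset.erase_subset _ _)
            fun j _ _ => by positivity
      _ = ∑ t ∈ (Finset.univ.filter (ρ · < N)).image ρ, (k : ℝ) * α ^ t := by
          rw [Finset.sum_image hρ.injOn, Finset.sum_filter]
      _ ≤ ∑ t ∈ Finset.range N, (k : ℝ) * α ^ t :=
          Finset.sum_le_sum_of_subset_of_nonneg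
            (fun t ht => by
              obtain ⟨j, hj, rfl⟩ := Finset.mem_image.1 ht
              exact Finset.mem_range.2 (Finset.mem_filter.1 hj).2)
            fun t _ _ => by positivity
      _ = (k : ℝ) * ∑ t ∈ Finset.range N, α ^ t := (Finset.mul_sum ..).symm
  rw [← Finset.add_sum_erase _ _ (Finset.mem_univ T)]
  have := Finset.sum_le_sum hterm
  rw [Finset.sum_neg_distrib] at this
  nlinarith [pow_pos hα0 N]

section SignedPermutation

variable {n : ℕ}

def IsLatticePoint (k : ℕ) (v : Fin n → ℝ) : Prop :=
  ∀ i, (∃ z : ℤ, v i = (z : ℝ)) ∧ 0 ≤ v i ∧ v i ≤ (k : ℝ)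

theorem dotp_signedPermVec_sub (π : Equiv.Perm (Fin n)) (ε : Fin n → ℝ) (α : ℝ)
    (u w : Fin n → ℝ) :
    dotp (signedPermVec π ε α) u - dotp (signedPermVec π ε α) w
      = α * ∑ j, ε j * (u j - w j) * α ^ (π j : ℕ) := by
  simp only [dotp, signedPermVec, ← Finset.sum_sub_distrib, Finset.mul_sum]
  exact Finset.sum_congr rfl fun j _ => by ring

theorem one_le_sign_mul_sub {ε x y : ℝ} (hε : ε = 1 ∨ ε = -1) (hx : ∃ z : ℤ, x = z)
    (hy : ∃ z : ℤ, y = z) (h : ε * y < ε * x) : 1 ≤ ε * (x - y) := by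
  obtain ⟨a, rfl⟩ := hx
  obtain ⟨b, rfl⟩ := hy
  rcases hε with rfl | rfl
  · have : b < a := by exact_mod_cast (by linarith : (b : ℝ) < a)
    have : (b : ℝ) + 1 ≤ a := by exact_mod_cast this
    linarith
  · have : a < b := by exact_mod_cast (by linarith : (a : ℝ) < b)
    have : (a : ℝ) + 1 ≤ b := by exact_mod_cast this
    linarith

theorem dotp_signedPermVec_lt {k : ℕ} {π : Equiv.Perm (Fin n)} {ε : Fin n → ℝ}
    (hε : ∀ i, ε i = 1 ∨ ε i = -1) {α : ℝ} (hα : (k : ℝ) + 1 ≤ α) {u w : Fin n → ℝ}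
    (hu : IsLatticePoint k u) (hw : IsLatticePoint k w) {a : Fin n}
    (hhi : ∀ j, π a < π j → u j = w j) (ha : ε a * w a < ε a * u a) :
    dotp (signedPermVec π ε α) w < dotp (signedPermVec π ε α) u := by
  rw [← sub_pos, dotp_signedPermVec_sub]
  refine mul_pos (by linarith [(k.cast_nonneg : (0 : ℝ) ≤ k)])
    (sum_mul_pow_pos (Fin.val_injective.comp π.injective) hα (fun j => ?_)
      (one_le_sign_mul_sub (hε a) (hu a).1 (hw a).1 ha) fun j hj => by simp [hhi j hj])
  have hεj : |ε j| = 1 := by rcases hε j with h | h <;> simp [h]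
  rw [abs_mul, hεj, one_mul]
  exact abs_sub_le_of_nonneg_of_le (hu j).2.1 (hu j).2.2 (hw j).2.1 (hw j).2.2

theorem exists_max_nonconstant_coord (π : Equiv.Perm (Fin n)) {X : Set (Fin n → ℝ)}
    {u w : Fin n → ℝ} (hu : u ∈ X) (hw : w ∈ X) (hne : u ≠ w) :
    ∃ a, (∃ u ∈ X, ∃ w ∈ X, u a ≠ w a) ∧ ∀ j, π a < π j → ∀ u ∈ X, ∀ w ∈ X, u j = w j := by
  classical
  obtain ⟨i, hi⟩ := Function.ne_iff.1 hne
  obtain ⟨a, ha, hmax⟩ := (Finset.univ.filter fun j => ∃ u ∈ X, ∃ w ∈ X, u j ≠ w j).exists_max_image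
    π ⟨i, Finset.mem_filter.2 ⟨Finset.mem_univ i, u, hu, w, hw, hi⟩⟩
  refine ⟨a, (Finset.mem_filter.1 ha).2, fun j hj u hu w hw => ?_⟩
  by_contra h
  exact (hmax j (Finset.mem_filter.2 ⟨Finset.mem_univ j, u, hu, w, hw, h⟩)).not_gt hj

theorem dotp_signedPermVec_ne {k : ℕ} {π : Equiv.Perm (Fin n)} {ε : Fin n → ℝ}
    (hε : ∀ i, ε i = 1 ∨ ε i = -1) {α : ℝ} (hα : (k : ℝ) + 1 ≤ α) {u w : Fin n → ℝ}
    (hu : IsLatticePoint k u) (hw : IsLatticePoint k w) (hne : u ≠ w) :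
    dotp (signedPermVec π ε α) u ≠ dotp (signedPermVec π ε α) w := by
  obtain ⟨a, ⟨u', hu', w', hw', hne'⟩, hhi⟩ :=
    exists_max_nonconstant_coord π (X := {u, w}) (by simp) (by simp) hne
  have hua : u a ≠ w a := fun h => hne' (by
    rcases hu' with rfl | rfl <;> rcases hw' with rfl | rfl <;> simp [h])
  have hεa : ε a ≠ 0 := by rcases hε a with h | h <;> simp [h]
  have hhi' : ∀ j, π a < π j → u j = w j := fun j hj => hhi j hj u (by simp) w (by simp)
  rcases lt_or_gt_of_ne (mt (mul_left_cancel₀ hεa) hua) with h | h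
  · exact (dotp_signedPermVec_lt hε hα hw hu (fun j hj => (hhi' j hj).symm) h).ne
  · exact (dotp_signedPermVec_lt hε hα hu hw hhi' h).ne'

end SignedPermutation

section GreatestImprovement

variable {n : ℕ}

def IsGreatestImprovementStep (P : Set (Fin n → ℝ)) (c u w : Fin n → ℝ) : Prop :=
  IsEdgeOf P u w ∧ dotp c u < dotp c w ∧ ∀ w', IsEdgeOf P u w' → dotp c w' ≤ dotp c w

theorem IsGreatestImprovementStep.toExposed {P : Set (Fin n → ℝ)} (hP : IsPolytope P)
    {c u w : Fin n → ℝ} (h : IsGreatestImprovementStep P c u w) {l : StrongDual ℝ (Fin n → ℝ)}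
    (hu : u ∈ l.toExposed P) (hw : w ∈ l.toExposed P) :
    IsGreatestImprovementStep (l.toExposed P) c u w := by
  obtain ⟨S, -, rfl⟩ := hP
  have hconv : Convex ℝ (l.toExposed (convexHull ℝ (S : Set (Fin n → ℝ)))) := by
    rw [toExposed_convexHull]; exact convex_convexHull ℝ _
  exact ⟨h.1.of_subset (Set.sep_subset _ _) hconv hu hw, h.2.1,
    fun w' hw' => h.2.2 w' hw'.of_toExposed⟩

theorem IsLatticePolytope.toExposed {k : ℕ} {P : Set (Fin n → ℝ)} (hP : IsLatticePolytope k P)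
    (l : StrongDual ℝ (Fin n → ℝ)) : IsLatticePolytope k (l.toExposed P) := by
  obtain ⟨⟨S, hS, rfl⟩, hbox⟩ := hP
  exact ⟨⟨argmaxSet S l, argmaxSet_nonempty hS l, toExposed_convexHull S l⟩, fun v hv =>
    hbox v
      (ContinuousLinearMap.toExposed.isExposed.isExtreme.extremePoints_subset_extremePoints hv)⟩

theorem IsPolytope.polytopeDim_toExposed_lt {P : Set (Fin n → ℝ)} (hP : IsPolytope P)
    {l : StrongDual ℝ (Fin n → ℝ)} (hl : ∃ x ∈ P, ∃ y ∈ P, l x ≠ l y) :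
    polytopeDim (l.toExposed P) < polytopeDim P := by
  obtain ⟨S, hS, rfl⟩ := hP
  refine finrank_direction_toExposed_lt ?_ hl
  rw [toExposed_convexHull, convexHull_nonempty_iff, Finset.coe_nonempty]
  exact argmaxSet_nonempty hS l

theorem isVertexOf_of_isEdgeOf_chain {P : Set (Fin n → ℝ)} {p : ℕ → Fin n → ℝ} {m : ℕ}
    (hm : 0 < m) (hedge : ∀ i < m, IsEdgeOf P (p i) (p (i + 1))) (i : ℕ) (hi : i ≤ m) :
    IsVertexOf P (p i) := by
  rcases hi.lt_or_eq with hi | rfl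
  · exact (hedge i hi).2.1
  · have := (hedge (i - 1) (by omega)).2.2.1
    rwa [Nat.sub_add_cancel hm] at this

theorem exists_sign_mul_coord_stall {k m : ℕ} (hkm : k < m) {p : ℕ → Fin n → ℝ}
    (hbox : ∀ i ≤ m, IsLatticePoint k (p i)) {c : ℝ} (hc : c = 1 ∨ c = -1) {a : Fin n}
    (hmono : ∀ i < m, c * p i a ≤ c * p (i + 1) a) : ∃ t ≤ k, c * p (t + 1) a = c * p t a := by
  by_contra! hstall
  have hclimb : ∀ j ≤ k + 1, c * p 0 a + j ≤ c * p j a := by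
    intro j
    induction j with
    | zero => simp
    | succ j ih =>
      intro hj
      have hlt := (hmono j (by omega)).lt_of_ne (hstall j (by omega)).symm
      have := one_le_sign_mul_sub hc (hbox (j + 1) (by omega) a).1 (hbox j (by omega) a).1 hlt
      push_cast
      linarith [ih (by omega)]
  have h0 := hbox 0 (by omega) a
  have h1 := hbox (k + 1) hkm a
  have := hclimb (k + 1) le_rfl
  push_cast at this
  rcases hc with rfl | rfl <;> linarith [h0.2.1, h0.2.2, h1.2.1, h1.2.2]

/-- A neighbour improving the coordinate `a` would beat the target of the step. -/
theorem isMaxOn_coord_of_stall {k : ℕ} {P : Set (Fin n → ℝ)} (hP : IsLatticePolytope k P)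
    {π : Equiv.Perm (Fin n)} {ε : Fin n → ℝ} (hε : ∀ i, ε i = 1 ∨ ε i = -1) {α : ℝ}
    (hα : (k : ℝ) + 1 ≤ α) {a : Fin n}
    (htop : ∀ j, π a < π j → ∀ u ∈ P.extremePoints ℝ, ∀ w ∈ P.extremePoints ℝ, u j = w j)
    {u w : Fin n → ℝ} (hstep : IsGreatestImprovementStep P (signedPermVec π ε α) u w)
    (hstall : ε a * w a = ε a * u a) :
    IsMaxOn (ε a • ContinuousLinearMap.proj a : StrongDual ℝ (Fin n → ℝ)) P u := by
  refine hP.1.isMaxOn_of_isEdgeOf_le hstep.1.2.1 fun w' hw' => le_of_not_gt fun hlt => ?_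
  simp only [FunLike.coe_smul, Pi.smul_apply, ContinuousLinearMap.proj_apply, smul_eq_mul] at hlt
  exact (hstep.2.2 w' hw').not_gt (dotp_signedPermVec_lt hε hα (hP.2 _ hw'.2.2.1)
    (hP.2 _ hstep.1.2.2.1) (fun j hj => htop j hj _ hw'.2.2.1 _ hstep.1.2.2.1) (hstall ▸ hlt))

end GreatestImprovement

theorem greatest_improvement_path_length_le {n k : ℕ} {π : Equiv.Perm (Fin n)} {ε : Fin n → ℝ}
    (hε : ∀ i, ε i = 1 ∨ ε i = -1) {α : ℝ} (hα : (k : ℝ) + 1 ≤ α) {P : Set (Fin n → ℝ)}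
    (hP : IsLatticePolytope k P) (p : ℕ → Fin n → ℝ) (m : ℕ)
    (hstep : ∀ i < m, IsGreatestImprovementStep P (signedPermVec π ε α) (p i) (p (i + 1))) :
    m ≤ polytopeDim P * k := by
  induction hd : polytopeDim P using Nat.strong_induction_on generalizing P p m with
  | _ d ih =>
    rcases Nat.eq_zero_or_pos m with rfl | hm
    · exact Nat.zero_le _
    have hvert := isVertexOf_of_isEdgeOf_chain hm fun i hi => (hstep i hi).1
    have hbox : ∀ i ≤ m, IsLatticePoint k (p i) := fun i hi => hP.2 _ (hvert i hi)
    obtain ⟨a, ⟨u, hu, w, hw, huw⟩, htop⟩ :=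
      exists_max_nonconstant_coord π (X := P.extremePoints ℝ) (hvert 0 hm.le) (hvert 1 hm)
        (hstep 0 hm).1.1
    set g : StrongDual ℝ (Fin n → ℝ) := ε a • ContinuousLinearMap.proj a
    have hεa : ε a ≠ 0 := by rcases hε a with h | h <;> simp [h]
    have hdim : polytopeDim (g.toExposed P) < d := hd ▸ hP.1.polytopeDim_toExposed_lt
      ⟨u, extremePoints_subset hu, w, extremePoints_subset hw, mt (mul_left_cancel₀ hεa) huw⟩
    have hmono : ∀ i < m, g (p i) ≤ g (p (i + 1)) := fun i hi => le_of_not_gt fun hlt =>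
      (hstep i hi).2.1.not_gt (dotp_signedPermVec_lt hε hα (hbox i hi.le) (hbox (i + 1) hi)
        (fun j hj => htop j hj _ (hvert i hi.le) _ (hvert (i + 1) hi)) hlt)
    rcases le_or_gt m k with hmk | hkm
    · exact hmk.trans (Nat.le_mul_of_pos_left k (by omega))
    obtain ⟨t, htk, hstall⟩ := exists_sign_mul_coord_stall hkm hbox (hε a) hmono
    have htmax := isMaxOn_coord_of_stall hP hε hα htop (hstep t (by omega)) hstall
    have hface : ∀ i, t ≤ i → i ≤ m → p i ∈ g.toExposed P := by
      intro i hti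
      induction i, hti using Nat.le_induction with
      | base => exact fun ht => ⟨extremePoints_subset (hvert t ht), htmax⟩
      | succ i hti ih =>
        exact fun hi => mem_toExposed_of_le (ih (by omega)) (extremePoints_subset (hvert _ hi))
          (hmono i (by omega))
    have hsuffix := ih _ hdim (hP.toExposed g) (fun i => p (t + i)) (m - t)
      (fun i hi => (hstep (t + i) (by omega)).toExposed hP.1 (hface _ (by omega) (by omega))
        (hface _ (by omega) (by omega))) rfl
    have hk : (polytopeDim (g.toExposed P) + 1) * k ≤ d * k := Nat.mul_le_mul_right k hdim
    rw [add_mul, one_mul] at hk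
    omega

noncomputable def dotpCLM {n : ℕ} (c : Fin n → ℝ) : StrongDual ℝ (Fin n → ℝ) :=
  ∑ i, c i • ContinuousLinearMap.proj i

theorem dotpCLM_apply {n : ℕ} (c x : Fin n → ℝ) : dotpCLM c x = dotp c x := by
  simp [dotpCLM, dotp]

/-- **Lemma (greatest improvement paths to the `x_σ`-maximum).**
Let `P ⊆ ℝ^n` be a `(0,k)`-lattice polytope of dimension `d`, `σ = (π, ε)` a
signed permutation, `α ≥ 2k+1`, and `x_σ` the associated vector. Any sequence of
greatest-improvement steps for `x_σ` starting from any vertex and ending at a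
vertex with no `x_σ`-improving neighbor ends at the unique `x_σ`-maximal vertex
and has length at most `dk`. -/
theorem greatest_improvement_path_bound {n : ℕ} (k : ℕ) (P : Set (Fin n → ℝ))
    (hP : IsLatticePolytope k P)
    (d : ℕ) (hd : d = polytopeDim P)
    (π : Equiv.Perm (Fin n)) (ε : Fin n → ℝ) (hε : ∀ i, ε i = 1 ∨ ε i = -1)
    (α : ℝ) (hα : 2 * (k : ℝ) + 1 ≤ α)
    (m : ℕ) (p : Fin (m + 1) → (Fin n → ℝ))
    (hvert : ∀ i, IsVertexOf P (p i))
    (hstep : ∀ i : Fin m,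
      IsEdgeOf P (p i.castSucc) (p i.succ) ∧
      dotp (signedPermVec π ε α) (p i.castSucc) <
        dotp (signedPermVec π ε α) (p i.succ) ∧
      ∀ w : Fin n → ℝ, IsEdgeOf P (p i.castSucc) w →
        dotp (signedPermVec π ε α) w ≤ dotp (signedPermVec π ε α) (p i.succ))
    (hlast : ∀ w : Fin n → ℝ, IsEdgeOf P (p (Fin.last m)) w →
      dotp (signedPermVec π ε α) w ≤ dotp (signedPermVec π ε α) (p (Fin.last m))) :
    (∀ x ∈ P, dotp (signedPermVec π ε α) x ≤
        dotp (signedPermVec π ε α) (p (Fin.last m))) ∧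
    (∀ w : Fin n → ℝ, IsVertexOf P w →
      (∀ x ∈ P, dotp (signedPermVec π ε α) x ≤ dotp (signedPermVec π ε α) w) →
      w = p (Fin.last m)) ∧
    m ≤ d * k := by
  have hαk : (k : ℝ) + 1 ≤ α := by linarith [(k.cast_nonneg : (0 : ℝ) ≤ k)]
  have hmax : ∀ x ∈ P, dotp (signedPermVec π ε α) x ≤
      dotp (signedPermVec π ε α) (p (Fin.last m)) := by
    simpa only [IsMaxOn, IsMaxFilter, Filter.eventually_principal, dotpCLM_apply] using
      hP.1.isMaxOn_of_isEdgeOf_le (hvert _) (l := dotpCLM (signedPermVec π ε α))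
        fun w hw => by simpa only [dotpCLM_apply] using hlast w hw
  refine ⟨hmax, fun w hw hwmax => ?_, ?_⟩
  · by_contra hne
    exact dotp_signedPermVec_ne hε hαk (hP.2 w hw) (hP.2 _ (hvert _)) hne
      (le_antisymm (hmax w (extremePoints_subset hw)) (hwmax _ (extremePoints_subset (hvert _))))
  · subst hd
    refine greatest_improvement_path_length_le (π := π) hε hαk hP (fun i => p (Fin.clamp i m)) m
      fun i hi => ?_
    have hcast : Fin.clamp i m = (⟨i, hi⟩ : Fin m).castSucc := Fin.ext (min_eq_left hi.le)
    have hsucc : Fin.clamp (i + 1) m = (⟨i, hi⟩ : Fin m).succ := Fin.ext (min_eq_left hi)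
    rw [hcast, hsucc]
    exact hstep ⟨i, hi⟩
end
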